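/- arXiv:2308.02001 — 2 statements merged into one kernel-verified Lean document; each statement's English description precedes it below -/
import Mathlib

section
/- For $A\in\mathbb{R}^{m\times d}$, $B\in\mathbb{R}^{n\times d}$, and $k\in\mathbb{N}$, the rank of the Hadamard power $(AB^T)^{(k)}$ equals $\min\{m,n,\binom{k+d-1}{k}\}$ for generic $(A,B)$, i.e., for all $(A,B)$ outside the zero set of a non-identically-zero polynomial. -/
/-!
Expanding `⟨a, b⟩ ^ k` by the multinomial theorem factors the Hadamard power as
`(A Bᵀ)^(k) = V(A) D V(B)ᵀ`, where `V` replaces each row by its vector of degree-`k` monomials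
(indexed by `Sym (Fin d) k`, a set of size `C(k+d-1, k)`) and `D` is the positive diagonal of
multinomial coefficients; this bounds the rank from above.

For the lower bound, `p` is a leading `r × r` minor of the generic Hadamard power, with
`r = min {m, n, C(k+d-1, k)}`. Monomials are linearly independent functions, so there are `r`
points whose monomial vectors are linearly independent. Taking these points as the rows of both
`A` and `B` turns the minor into the positive definite Gram matrix `V D Vᵀ`, hence `p ≠ 0`.
-/

open Matrix MvPolynomial

theorem span_range_eval_eq_top {K X ι : Type*} [Field K] [Fintype ι] {f : ι → X → K}
    (hf : LinearIndependent K f) : Submodule.span K (Set.range fun x i => f i x) = ⊤ := by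
  classical
  rw [← Submodule.dualAnnihilator_eq_bot_iff, eq_bot_iff]
  intro φ hφ
  rw [Submodule.mem_dualAnnihilator] at hφ
  have hc := Fintype.linearIndependent_iff.1 hf (fun i => φ fun j => if i = j then 1 else 0) <|
    funext fun x => by
      have := hφ _ (Submodule.subset_span ⟨x, rfl⟩)
      rw [LinearMap.pi_apply_eq_sum_univ φ] at this
      simpa [Finset.sum_apply, mul_comm] using this
  refine LinearMap.ext fun v => ?_
  simp [LinearMap.pi_apply_eq_sum_univ φ v, hc]

theorem exists_linearIndependent_comp_of_span_eq_top {K V ι κ : Type*} [DivisionRing K]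
    [AddCommGroup V] [Module K V] [FiniteDimensional K V] [Fintype κ] {v : ι → V}
    (hv : Submodule.span K (Set.range v) = ⊤) (hκ : Fintype.card κ ≤ Module.finrank K V) :
    ∃ f : κ → ι, LinearIndependent K (v ∘ f) := by
  obtain ⟨s, a, -, hspan, hli⟩ := exists_linearIndependent' K v
  let b := Module.Basis.mk hli (by rw [hspan, hv])
  have := Module.Finite.finite_basis b
  have := Fintype.ofFinite s
  obtain ⟨e⟩ := Function.Embedding.nonempty_of_card_le <|
    hκ.trans_eq (Module.finrank_eq_card_basis b)
  exact ⟨a ∘ e, hli.comp e e.injective⟩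

theorem det_mul_diagonal_mul_transpose_ne_zero {m n : Type*} [Fintype m] [DecidableEq m]
    [Fintype n] [DecidableEq n] {V : Matrix m n ℝ} (hV : LinearIndependent ℝ V.row) {c : n → ℝ}
    (hc : ∀ i, 0 < c i) : (V * diagonal c * Vᵀ).det ≠ 0 := by
  have hpos := (posDef_diagonal_iff.2 hc).mul_mul_conjTranspose_same (vecMul_injective_iff.2 hV)
  rw [conjTranspose_eq_transpose_of_trivial] at hpos
  exact hpos.det_pos.ne'

theorem card_le_rank_of_det_submatrix_ne_zero {K m n ι : Type*} [Field K] [Fintype n]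
    [Fintype ι] [DecidableEq ι] {M : Matrix m n K} {u : ι → m} {v : ι → n}
    (h : (M.submatrix u v).det ≠ 0) : Fintype.card ι ≤ M.rank := by
  rw [← rank_of_isUnit _ ((isUnit_iff_isUnit_det _).2 h.isUnit)]
  exact rank_submatrix_le M u v

section Veronese

variable {σ R : Type*} {k : ℕ}

def symMonomial [CommMonoid R] (μ : Sym σ k) (x : σ → R) : R :=
  ((μ : Multiset σ).map x).prod

def veronese [CommMonoid R] {m : Type*} (k : ℕ) (A : Matrix m σ R) : Matrix m (Sym σ k) R :=
  of fun i μ => symMonomial μ (A i)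

theorem pow_dotProduct_eq_sum_sym [CommSemiring R] [Fintype σ] [DecidableEq σ] (a b : σ → R) :
    (a ⬝ᵥ b) ^ k = ∑ μ : Sym σ k,
      ((μ : Multiset σ).countPerms : R) * (symMonomial μ a * symMonomial μ b) := by
  rw [dotProduct, Finset.sum_pow, Finset.sym_univ]
  simp only [symMonomial, Multiset.prod_map_mul]
  rfl

theorem map_pow_mul_transpose_eq [CommSemiring R] [Fintype σ] [DecidableEq σ] {m n : Type*}
    (A : Matrix m σ R) (B : Matrix n σ R) (k : ℕ) :
    (A * Bᵀ).map (· ^ k) = veronese k A *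
      diagonal (fun μ : Sym σ k => ((μ : Multiset σ).countPerms : R)) * (veronese k B)ᵀ := by
  ext i j
  rw [map_apply, mul_apply', pow_dotProduct_eq_sum_sym, mul_apply]
  simp only [mul_diagonal, veronese, of_apply, transpose_apply]
  exact Finset.sum_congr rfl fun μ _ => by ring

theorem rank_map_pow_mul_transpose_le [CommRing R] [StrongRankCondition R] [Fintype σ]
    {m n : Type*} [Fintype m] [Fintype n] (A : Matrix m σ R) (B : Matrix n σ R) (k : ℕ) :
    ((A * Bᵀ).map (· ^ k)).rank ≤ (Fintype.card σ + k - 1).choose k := by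
  classical
  rw [map_pow_mul_transpose_eq]
  calc _ ≤ (veronese k A * diagonal _).rank := rank_mul_le_left _ _
    _ ≤ (veronese k A).rank := rank_mul_le_left _ _
    _ ≤ Fintype.card (Sym σ k) := rank_le_card_width _
    _ = _ := Sym.card_sym_eq_choose k

theorem linearIndependent_symMonomial [CommRing R] [IsDomain R] [Infinite R] [DecidableEq σ] :
    LinearIndependent R (fun (μ : Sym σ k) (x : σ → R) => symMonomial μ x) := by
  let evalₗ : MvPolynomial σ R →ₗ[R] (σ → R) → R := LinearMap.pi fun x => (aeval x).toLinearMap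
  have hker : LinearMap.ker evalₗ = ⊥ := LinearMap.ker_eq_bot'.2 fun p hp =>
    MvPolynomial.funext fun x => by simpa [evalₗ] using congrFun hp x
  have hmono : LinearIndependent R
      (fun μ : Sym σ k => monomial (Multiset.toFinsupp (μ : Multiset σ)) (1 : R)) :=
    (basisMonomials σ R).linearIndependent.comp _
      (Multiset.toFinsupp.injective.comp Sym.coe_injective)
  have heval : (fun (μ : Sym σ k) (x : σ → R) => symMonomial μ x) =
      evalₗ ∘ fun μ : Sym σ k => monomial (Multiset.toFinsupp (μ : Multiset σ)) 1 := by
    funext μ x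
    simp [evalₗ, symMonomial, eval_monomial, Finsupp.prod, Finset.prod_multiset_map_count]
  exact heval ▸ hmono.map' evalₗ hker

theorem exists_linearIndependent_veronese {σ R ι : Type*} [Field R] [Infinite R] [Fintype σ]
    [Fintype ι] {k : ℕ} (hι : Fintype.card ι ≤ (Fintype.card σ + k - 1).choose k) :
    ∃ x : Matrix ι σ R, LinearIndependent R (veronese k x).row := by
  classical
  rw [← Sym.card_sym_eq_choose] at hι
  obtain ⟨x, hx⟩ := exists_linearIndependent_comp_of_span_eq_top
    (span_range_eval_eq_top linearIndependent_symMonomial)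
    (hι.trans_eq (Module.finrank_fintype_fun_eq_card R).symm)
  exact ⟨x, hx⟩

end Veronese

section HadamardPowMinor

variable {R m n σ ι : Type*} [Fintype σ] [Fintype ι] [DecidableEq ι]

/-- The variable `Sum.inl (i, l)` stands for `A i l` and `Sum.inr (j, l)` for `B j l`. -/
noncomputable def hadamardPowMinor [CommRing R] (k : ℕ) (u : ι → m) (v : ι → n) :
    MvPolynomial ((m × σ) ⊕ (n × σ)) R :=
  (of fun i j => (∑ l, X (Sum.inl (u i, l)) * X (Sum.inr (v j, l))) ^ k).det

theorem eval_hadamardPowMinor [CommRing R] (A : Matrix m σ R) (B : Matrix n σ R) (k : ℕ)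
    (u : ι → m) (v : ι → n) :
    eval (Sum.elim (fun q => A q.1 q.2) (fun q => B q.1 q.2)) (hadamardPowMinor k u v) =
      (((A * Bᵀ).map (· ^ k)).submatrix u v).det := by
  rw [hadamardPowMinor, RingHom.map_det]
  congr 1
  ext i j
  simp [mul_apply]

theorem hadamardPowMinor_ne_zero {k : ℕ} {u : ι → m} {v : ι → n}
    (hu : u.Injective) (hv : v.Injective)
    (hι : Fintype.card ι ≤ (Fintype.card σ + k - 1).choose k) :
    hadamardPowMinor (R := ℝ) (σ := σ) k u v ≠ 0 := by
  classical
  obtain ⟨x, hx⟩ := exists_linearIndependent_veronese (R := ℝ) hι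
  set A : Matrix m σ ℝ := u.extend x 0
  set B : Matrix n σ ℝ := v.extend x 0
  have hA : A.submatrix u id = x := funext (hu.extend_apply x 0)
  have hB : B.submatrix v id = x := funext (hv.extend_apply x 0)
  intro h0
  have := congrArg (eval (Sum.elim (fun q => A q.1 q.2) (fun q => B q.1 q.2))) h0
  rw [eval_hadamardPowMinor, map_zero] at this
  change ((A.submatrix u id * (B.submatrix v id)ᵀ).map (· ^ k)).det = 0 at this
  rw [hA, hB, map_pow_mul_transpose_eq] at this
  exact det_mul_diagonal_mul_transpose_ne_zero hx (fun _ => mod_cast Nat.multinomial_pos _ _) this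

end HadamardPowMinor

/-- Generic rank of the Hadamard power: the rank of `(A Bᵀ)^(k)` (entrywise
`k`-th power) equals `min {m, n, C(k+d-1, k)}` for all `(A, B)` outside the
zero set of some non-identically-zero polynomial. -/
theorem stmt7 (m n d k : ℕ) :
    ∃ p : MvPolynomial ((Fin m × Fin d) ⊕ (Fin n × Fin d)) ℝ, p ≠ 0 ∧
      ∀ (A : Matrix (Fin m) (Fin d) ℝ) (B : Matrix (Fin n) (Fin d) ℝ),
        MvPolynomial.eval
            (Sum.elim (fun q => A q.1 q.2) (fun q => B q.1 q.2)) p ≠ 0 →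
          (Matrix.of fun i j => ((A * B.transpose) i j) ^ k).rank =
            min m (min n ((k + d - 1).choose k)) := by
  set r := min m (min n ((k + d - 1).choose k))
  have hrm : r ≤ m := min_le_left ..
  have hrn : r ≤ n := (min_le_right ..).trans (min_le_left ..)
  have hrN : r ≤ (d + k - 1).choose k := by
    rw [add_comm d]; exact (min_le_right ..).trans (min_le_right ..)
  refine ⟨hadamardPowMinor k (Fin.castLE hrm) (Fin.castLE hrn),
    hadamardPowMinor_ne_zero (Fin.castLE_injective _) (Fin.castLE_injective _) (by simpa using hrN),
    fun A B hAB => ?_⟩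
  rw [eval_hadamardPowMinor] at hAB
  change ((A * Bᵀ).map (· ^ k)).rank = r
  refine le_antisymm (le_min (rank_le_height _) (le_min (rank_le_width _) ?_)) ?_
  · simpa [add_comm] using rank_map_pow_mul_transpose_le A B k
  · simpa using card_le_rank_of_det_submatrix_ne_zero hAB
end

section
/- Define $h(W,b,v,X)=\psi(X^TW+\mathbb{1}_n b^T)v$ with $\psi$ continuously differentiable applied entrywise, $W\in\mathbb{R}^{d\times m}$, $b,v\in\mathbb{R}^m$, $X\in\mathbb{R}^{d\times n}$. If $m(d+2)<n$, then for every $X$ the image of $(W,b,v)\mapsto h(W,b,v,X)$ has Lebesgue measure zero in $\mathbb{R}^n$; in particular it is not surjective. -/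
open MeasureTheory Module Set

/-!
A `C¹` map is locally Lipschitz, so it does not increase Hausdorff dimension: the image of
the parameter space has Hausdorff dimension at most `m(d+2) < n`, hence is `μH[n]`-null,
and `μH[n]` is Lebesgue measure on `ℝⁿ`.
-/

theorem ContDiff.volume_range_eq_zero_of_finrank_lt {E ι : Type*} [NormedAddCommGroup E]
    [NormedSpace ℝ E] [FiniteDimensional ℝ E] [Fintype ι] {f : E → ι → ℝ}
    (hf : ContDiff ℝ 1 f) (hdim : finrank ℝ E < Fintype.card ι) :
    volume (range f) = 0 := by
  have hlt : dimH (range f) < ((Fintype.card ι : NNReal) : ENNReal) :=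
    hf.dimH_range_le.trans_lt (by exact_mod_cast hdim)
  rw [← hausdorffMeasure_pi_real, ← NNReal.coe_natCast]
  exact hausdorffMeasure_of_dimH_lt hlt

theorem not_surjective_of_measure_range_eq_zero {α β : Type*} [TopologicalSpace β]
    [MeasurableSpace β] [Nonempty β] {μ : Measure β} [μ.IsOpenPosMeasure] {f : α → β}
    (hf : μ (range f) = 0) : ¬ Function.Surjective f := fun hsurj =>
  isOpen_univ.measure_ne_zero μ univ_nonempty (hsurj.range_eq ▸ hf)

/-- Memory capacity upper bound: with `ψ` continuously differentiable applied
entrywise and `h(W,b,v,X) = ψ(XᵀW + 𝟙ₙ bᵀ) v`, if `m(d+2) < n` then for every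
`X` the image of `(W,b,v) ↦ h(W,b,v,X)` has Lebesgue measure zero in `ℝⁿ`;
in particular it is not surjective. -/
theorem stmt18 (d m n : ℕ) (ψ : ℝ → ℝ) (hψ : ContDiff ℝ 1 ψ)
    (hsize : m * (d + 2) < n) :
    ∀ X : Fin d → Fin n → ℝ,
      MeasureTheory.volume
        (Set.range (fun p : (Fin d → Fin m → ℝ) × (Fin m → ℝ) × (Fin m → ℝ) =>
          (fun j : Fin n =>
            ∑ i : Fin m, p.2.2 i * ψ ((∑ r : Fin d, X r j * p.1 r i) + p.2.1 i)))) = 0 ∧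
      ¬ Function.Surjective
          (fun p : (Fin d → Fin m → ℝ) × (Fin m → ℝ) × (Fin m → ℝ) =>
            (fun j : Fin n =>
              ∑ i : Fin m, p.2.2 i * ψ ((∑ r : Fin d, X r j * p.1 r i) + p.2.1 i))) := by
  intro X
  have hdim : finrank ℝ ((Fin d → Fin m → ℝ) × (Fin m → ℝ) × (Fin m → ℝ)) = m * (d + 2) := by
    simp only [finrank_prod, finrank_pi_fintype, finrank_self, Finset.sum_const,
      Finset.card_univ, Fintype.card_fin, smul_eq_mul]
    ring
  refine ⟨?hnull, not_surjective_of_measure_range_eq_zero ?hnull⟩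
  exact ContDiff.volume_range_eq_zero_of_finrank_lt (by fun_prop)
    (hdim.trans_lt (hsize.trans_eq (Fintype.card_fin n).symm))
end
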